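/- Let α and ρ be reals in (0, 1/2) with H(α) + H(ρ) > 1, where H is the binary entropy. Then for all sufficiently large n, with a = ⌊αn⌋ and r = ⌊ρn⌋, one has C(n, a) · ∑_{i=0}^{r} C(n, i) > 2^n. -/

import Mathlib

/-!
Expanding `n ^ n = (k + (n - k)) ^ n` binomially, the `n + 1` terms are largest at `i = k`,
so `C(n, k) ≥ n ^ n / ((n + 1) k ^ k (n - k) ^ (n - k)) = exp (n H(k / n)) / (n + 1)`,
with `H` the entropy in nats. Taking `k = ⌊αn⌋`, continuity of `H` and `log (n + 1) = o(n)` give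
`C(n, ⌊αn⌋) ≥ exp (n (H(α) - ε))` eventually, for every `ε > 0`. Because `H(α) + H(ρ) > log 2`,
the product `C(n, ⌊αn⌋) C(n, ⌊ρn⌋)`, a lower bound for `C(n, ⌊αn⌋) ∑_{i ≤ ⌊ρn⌋} C(n, i)`,
eventually exceeds `2 ^ n`.
-/

/-- The binary entropy function. -/
noncomputable def binEnt (x : ℝ) : ℝ := -x * Real.logb 2 x - (1 - x) * Real.logb 2 (1 - x)

open Real Filter Finset Topology

namespace Nat

def binomialTerm (n k i : ℕ) : ℕ := n.choose i * k ^ i * (n - k) ^ (n - i)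

variable {n k j : ℕ}

theorem sum_binomialTerm (hk : k ≤ n) : ∑ i ∈ range (n + 1), binomialTerm n k i = n ^ n := by
  calc ∑ i ∈ range (n + 1), binomialTerm n k i
      = ∑ i ∈ range (n + 1), k ^ i * (n - k) ^ (n - i) * n.choose i :=
        sum_congr rfl fun i _ => by rw [binomialTerm]; ring
    _ = (k + (n - k)) ^ n := by rw [add_pow]; simp only [Nat.cast_id]
    _ = n ^ n := by rw [Nat.add_sub_cancel' hk]

theorem binomialTerm_succ_mul (hj : j < n) :
    binomialTerm n k (j + 1) * ((j + 1) * (n - k)) = binomialTerm n k j * ((n - j) * k) := by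
  obtain ⟨m, hm⟩ : ∃ m, n - j = m + 1 := ⟨n - (j + 1), by omega⟩
  have hsucc : n - (j + 1) = m := by omega
  have hchoose := Nat.choose_succ_right_eq n j
  simp only [binomialTerm, hm, hsucc] at hchoose ⊢
  calc n.choose (j + 1) * k ^ (j + 1) * (n - k) ^ m * ((j + 1) * (n - k))
      = n.choose (j + 1) * (j + 1) * (k ^ j * k) * (n - k) ^ (m + 1) := by ring
    _ = n.choose j * k ^ j * (n - k) ^ (m + 1) * ((m + 1) * k) := by rw [hchoose]; ring

theorem binomialTerm_le_succ (hjk : j < k) (hkn : k < n) :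
    binomialTerm n k j ≤ binomialTerm n k (j + 1) := by
  refine Nat.le_of_mul_le_mul_right ?_ (Nat.mul_pos j.succ_pos (Nat.sub_pos_of_lt hkn))
  calc binomialTerm n k j * ((j + 1) * (n - k))
      ≤ binomialTerm n k j * ((n - j) * k) := by
        gcongr binomialTerm n k j * ?_
        rw [mul_comm (n - j)]
        exact Nat.mul_le_mul (by omega) (by omega)
    _ = binomialTerm n k (j + 1) * ((j + 1) * (n - k)) := (binomialTerm_succ_mul (by omega)).symm

theorem binomialTerm_succ_le (hk : 0 < k) (hkj : k ≤ j) (hjn : j < n) :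
    binomialTerm n k (j + 1) ≤ binomialTerm n k j := by
  refine Nat.le_of_mul_le_mul_right ?_ (Nat.mul_pos (Nat.sub_pos_of_lt hjn) hk)
  calc binomialTerm n k (j + 1) * ((n - j) * k)
      ≤ binomialTerm n k (j + 1) * ((j + 1) * (n - k)) := by
        gcongr binomialTerm n k (j + 1) * ?_
        rw [mul_comm (j + 1)]
        exact Nat.mul_le_mul (by omega) (by omega)
    _ = binomialTerm n k j * ((n - j) * k) := binomialTerm_succ_mul hjn

theorem binomialTerm_le_binomialTerm_self (hk : 0 < k) (hkn : k < n) {i : ℕ} (hi : i ≤ n) :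
    binomialTerm n k i ≤ binomialTerm n k k := by
  rcases le_total i k with hik | hki
  · induction hik using Nat.decreasingInduction with
    | self => rfl
    | of_succ j hjk ih => exact (binomialTerm_le_succ hjk hkn).trans (ih (by omega))
  · induction i, hki using Nat.le_induction with
    | base => rfl
    | succ j hkj ih => exact (binomialTerm_succ_le hk hkj (by omega)).trans (ih (by omega))

theorem pow_self_le_succ_mul_binomialTerm (hk : 0 < k) (hkn : k < n) :
    n ^ n ≤ (n + 1) * binomialTerm n k k := by
  rw [← sum_binomialTerm hkn.le]
  simpa using sum_le_card_nsmul _ _ _ fun i hi =>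
    binomialTerm_le_binomialTerm_self hk hkn (Nat.lt_succ_iff.mp (mem_range.mp hi))

end Nat

theorem Real.add_mul_binEntropy_div {x y : ℝ} (hx : 0 < x) (hy : 0 < y) :
    (x + y) * binEntropy (x / (x + y)) = x * log ((x + y) / x) + y * log ((x + y) / y) := by
  rw [binEntropy, inv_div, show 1 - x / (x + y) = y / (x + y) by field_simp; ring, inv_div]
  field_simp

theorem Real.exp_mul_binEntropy_mul_pow {n k : ℕ} (hk : 0 < k) (hkn : k < n) :
    exp (n * binEntropy (k / n)) * (k ^ k * (n - k : ℕ) ^ (n - k)) = (n : ℝ) ^ n := by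
  have hk' : (0 : ℝ) < k := by exact_mod_cast hk
  have hm : (0 : ℝ) < (n - k : ℕ) := by exact_mod_cast Nat.sub_pos_of_lt hkn
  have hn : (n : ℝ) = k + (n - k : ℕ) := by rw [Nat.cast_sub hkn.le]; ring
  rw [hn, add_mul_binEntropy_div hk' hm, exp_add, exp_nat_mul, exp_nat_mul,
    exp_log (by positivity), exp_log (by positivity), div_pow, div_pow, ← hn]
  field_simp
  rw [← pow_add, Nat.add_sub_cancel' hkn.le]

theorem Real.exp_mul_binEntropy_le_choose {n k : ℕ} (hk : 0 < k) (hkn : k < n) :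
    exp (n * binEntropy (k / n)) ≤ (n + 1) * n.choose k := by
  have hpow : (0 : ℝ) < k ^ k * (n - k : ℕ) ^ (n - k) := by
    have : 0 < n - k := Nat.sub_pos_of_lt hkn
    positivity
  have hterm : (n : ℝ) ^ n ≤ (n + 1) * (n.choose k * k ^ k * (n - k : ℕ) ^ (n - k)) := by
    exact_mod_cast Nat.pow_self_le_succ_mul_binomialTerm hk hkn
  refine le_of_mul_le_mul_right ?_ hpow
  rw [exp_mul_binEntropy_mul_pow hk hkn]
  linarith

theorem binEnt_eq_binEntropy_div_log_two (x : ℝ) : binEnt x = binEntropy x / log 2 := by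
  rw [binEnt, binEntropy, logb, logb, log_inv, log_inv]
  ring

theorem eventually_log_add_one_le_mul {ε : ℝ} (hε : 0 < ε) :
    ∀ᶠ n : ℕ in atTop, log (n + 1) ≤ ε * n := by
  have hshift : Tendsto (fun n : ℕ => (n : ℝ) + 1) atTop atTop :=
    tendsto_atTop_add_const_right _ _ tendsto_natCast_atTop_atTop
  filter_upwards [hshift.eventually (isLittleO_log_id_atTop.bound (half_pos hε)),
      eventually_ge_atTop 1] with n hlog hn
  have hn' : (1 : ℝ) ≤ n := by exact_mod_cast hn
  rw [norm_of_nonneg (log_nonneg (by linarith)), id, norm_of_nonneg (by positivity)] at hlog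
  nlinarith

theorem eventually_exp_le_choose_floor_mul {α ε : ℝ} (hα0 : 0 < α) (hα1 : α < 1)
    (hε : 0 < ε) : ∀ᶠ n : ℕ in atTop, exp (n * (binEntropy α - ε)) ≤ n.choose ⌊α * n⌋₊ := by
  have hratio : Tendsto (fun n : ℕ => binEntropy (⌊α * n⌋₊ / n)) atTop (𝓝 (binEntropy α)) :=
    (binEntropy_continuous.tendsto α).comp
      ((tendsto_nat_floor_mul_div_atTop hα0.le).comp tendsto_natCast_atTop_atTop)
  filter_upwards [hratio.eventually (lt_mem_nhds (sub_lt_self _ (half_pos hε))),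
      eventually_log_add_one_le_mul (half_pos hε),
      (tendsto_nat_floor_mul_atTop α hα0).eventually_ge_atTop 1,
      eventually_gt_atTop 0] with n hent hlog hfloor hn
  have hn' : (0 : ℝ) < n := by exact_mod_cast hn
  have hlt : ⌊α * n⌋₊ < n := by
    rw [Nat.floor_lt (by positivity)]
    nlinarith
  calc exp (n * (binEntropy α - ε))
      ≤ exp (n * binEntropy (⌊α * n⌋₊ / n) - log (n + 1)) := by
        gcongr
        nlinarith
    _ = exp (n * binEntropy (⌊α * n⌋₊ / n)) / (n + 1) := by
        rw [exp_sub, exp_log (by positivity)]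
    _ ≤ n.choose ⌊α * n⌋₊ := by
        rw [div_le_iff₀ (by positivity), mul_comm _ (_ + 1 : ℝ)]
        exact exp_mul_binEntropy_le_choose hfloor hlt

/-- If `α, ρ ∈ (0, 1/2)` with `H(α) + H(ρ) > 1`, then for all sufficiently
large `n`, `C(n, ⌊αn⌋) · ∑_{i=0}^{⌊ρn⌋} C(n, i) > 2^n`. -/
theorem volume_bound (α ρ : ℝ) (hα0 : 0 < α) (hα : α < 1 / 2)
    (hρ0 : 0 < ρ) (hρ : ρ < 1 / 2) (hH : binEnt α + binEnt ρ > 1) :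
    ∃ N : ℕ, ∀ n : ℕ, N ≤ n →
      2 ^ n < n.choose ⌊α * n⌋₊ * ∑ i ∈ Finset.range (⌊ρ * n⌋₊ + 1), n.choose i := by
  have hgap : log 2 < binEntropy α + binEntropy ρ := by
    rwa [binEnt_eq_binEntropy_div_log_two, binEnt_eq_binEntropy_div_log_two, ← add_div, gt_iff_lt,
      one_lt_div (log_pos one_lt_two)] at hH
  obtain ⟨ε, hε, hεgap⟩ : ∃ ε > 0, log 2 + 2 * ε < binEntropy α + binEntropy ρ :=
    ⟨(binEntropy α + binEntropy ρ - log 2) / 4, by linarith, by linarith⟩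
  rw [← eventually_atTop]
  filter_upwards [eventually_exp_le_choose_floor_mul hα0 (by linarith) hε,
      eventually_exp_le_choose_floor_mul hρ0 (by linarith) hε,
      eventually_gt_atTop 0] with n hchooseα hchooseρ hn
  have hn' : (0 : ℝ) < n := by exact_mod_cast hn
  have hprod : (2 : ℝ) ^ n < n.choose ⌊α * n⌋₊ * n.choose ⌊ρ * n⌋₊ :=
    calc (2 : ℝ) ^ n = exp (n * log 2) := by rw [exp_nat_mul, exp_log two_pos]
      _ < exp (n * (binEntropy α - ε)) * exp (n * (binEntropy ρ - ε)) := by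
          rw [← exp_add]
          gcongr
          nlinarith
      _ ≤ n.choose ⌊α * n⌋₊ * n.choose ⌊ρ * n⌋₊ := by gcongr
  have hsum : n.choose ⌊ρ * n⌋₊ ≤ ∑ i ∈ range (⌊ρ * n⌋₊ + 1), n.choose i :=
    single_le_sum (fun i _ => Nat.zero_le _) (self_mem_range_succ _)
  have hbound :
      (2 : ℝ) ^ n < n.choose ⌊α * n⌋₊ * ∑ i ∈ range (⌊ρ * n⌋₊ + 1), (n.choose i : ℝ) :=
    hprod.trans_le (by gcongr; exact_mod_cast hsum)
  exact_mod_cast hbound
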